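/- Let k ≥ 2 and let v ∈ ℤ^{2k}. The following are equivalent: (i) there exist integers x, y and 0 ≤ p ≤ 2k such that v is Hurwitz equivalent to the vector with p entries x followed by 2k−p entries y; (ii) Δ(v) ∈ {0, d(v), −d(v)}. Moreover, v is Hurwitz equivalent to such a vector with both p and 2k−p even if and only if Δ(v) = 0. -/

import Mathlib

/-- Alternating sum `Δ(v) = Σ (-1)^i * v i` (0-indexed; `(-1)^(i-1) a_i` in 1-indexed terms). -/
def Delta {m : ℕ} (v : Fin m → ℤ) : ℤ :=
  ∑ i : Fin m, (-1 : ℤ) ^ (i : ℕ) * v i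

/-- `d(v)`: the (nonnegative) gcd of all pairwise differences of the entries of `v`;
for nonempty `v` this equals `gcd {v i - v 0 : i}`. -/
def dgcd {m : ℕ} (v : Fin m → ℤ) : ℤ :=
  Finset.univ.gcd (fun p : Fin m × Fin m => v p.1 - v p.2)

/-- `M(v)_N`: the multiset of residues of the entries of `v` modulo `N`
(for `N = 0` this is the multiset of the entries themselves). -/
def resM {m : ℕ} (v : Fin m → ℤ) (N : ℤ) : Multiset ℤ :=
  (Finset.univ.val : Multiset (Fin m)).map (fun i => v i % N)

/-- The Hurwitz move `v·σ_i` (0-indexed `i`). -/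
def sigmaAct {m : ℕ} (i : Fin (m - 1)) (v : Fin m → ℤ) : Fin m → ℤ :=
  have h : (i : ℕ) < m - 1 := i.isLt
  fun j =>
    if (j : ℕ) = (i : ℕ) then v ⟨(i : ℕ) + 1, by omega⟩
    else if (j : ℕ) = (i : ℕ) + 1 then
      2 * v ⟨(i : ℕ) + 1, by omega⟩ - v ⟨(i : ℕ), by omega⟩
    else v j

/-- The inverse Hurwitz move `v·σ_i⁻¹` (0-indexed `i`). -/
def sigmaInvAct {m : ℕ} (i : Fin (m - 1)) (v : Fin m → ℤ) : Fin m → ℤ :=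
  have h : (i : ℕ) < m - 1 := i.isLt
  fun j =>
    if (j : ℕ) = (i : ℕ) then 2 * v ⟨(i : ℕ), by omega⟩ - v ⟨(i : ℕ) + 1, by omega⟩
    else if (j : ℕ) = (i : ℕ) + 1 then v ⟨(i : ℕ), by omega⟩
    else v j

/-- The virtual move `v·τ_i`: swap the `i`-th and `(i+1)`-st entries (0-indexed `i`). -/
def tauAct {m : ℕ} (i : Fin (m - 1)) (v : Fin m → ℤ) : Fin m → ℤ :=
  have h : (i : ℕ) < m - 1 := i.isLt
  fun j =>
    if (j : ℕ) = (i : ℕ) then v ⟨(i : ℕ) + 1, by omega⟩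
    else if (j : ℕ) = (i : ℕ) + 1 then v ⟨(i : ℕ), by omega⟩
    else v j

/-- Hurwitz equivalence: the equivalence relation on `ℤ^m` generated by `v ∼ v·σ_i`. -/
def HurwitzEquiv {m : ℕ} : (Fin m → ℤ) → (Fin m → ℤ) → Prop :=
  Relation.EqvGen (fun v w => ∃ i : Fin (m - 1), w = sigmaAct i v)

/-- A letter of a braid word: an index `i` and a sign (`true` = `σ_i`, `false` = `σ_i⁻¹`). -/
abbrev BraidLetter (m : ℕ) := Fin (m - 1) × Bool

/-- Action of a single braid letter. -/
def braidLetterAct {m : ℕ} (l : BraidLetter m) (v : Fin m → ℤ) : Fin m → ℤ :=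
  if l.2 then sigmaAct l.1 v else sigmaInvAct l.1 v

/-- Action `v·β` of a braid word (letters applied in order). -/
def braidWordAct {m : ℕ} (β : List (BraidLetter m)) (v : Fin m → ℤ) : Fin m → ℤ :=
  β.foldl (fun w l => braidLetterAct l w) v

/-- The transposition `(i, i+1)` of `Fin m` associated to the index `i`. -/
def letterPerm {m : ℕ} (i : Fin (m - 1)) : Equiv.Perm (Fin m) :=
  have h : (i : ℕ) < m - 1 := i.isLt
  Equiv.swap ⟨(i : ℕ), by omega⟩ ⟨(i : ℕ) + 1, by omega⟩

/-- The underlying permutation `π_β` of a braid word: the product, composed in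
the same order as the letters are applied, of the transpositions `(i, i+1)`. -/
def braidWordPerm {m : ℕ} (β : List (BraidLetter m)) : Equiv.Perm (Fin m) :=
  β.foldl (fun p l => letterPerm l.1 * p) 1

/-- Pure-braid Hurwitz equivalence: related by a braid word with trivial
underlying permutation. -/
def PureEquiv {m : ℕ} (v w : Fin m → ℤ) : Prop :=
  ∃ β : List (BraidLetter m), braidWordAct β v = w ∧ braidWordPerm β = 1

/-- A letter of a virtual braid word: `(i, none)` = `τ_i`, `(i, some true)` = `σ_i`,
`(i, some false)` = `σ_i⁻¹`. -/
abbrev VBraidLetter (m : ℕ) := Fin (m - 1) × Option Bool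

/-- Action of a single virtual braid letter. -/
def vletterAct {m : ℕ} (l : VBraidLetter m) (v : Fin m → ℤ) : Fin m → ℤ :=
  match l.2 with
  | none => tauAct l.1 v
  | some true => sigmaAct l.1 v
  | some false => sigmaInvAct l.1 v

/-- Action `v·β` of a virtual braid word (letters applied in order). -/
def vwordAct {m : ℕ} (β : List (VBraidLetter m)) (v : Fin m → ℤ) : Fin m → ℤ :=
  β.foldl (fun w l => vletterAct l w) v

/-- The underlying permutation `π_β` of a virtual braid word. -/
def vwordPerm {m : ℕ} (β : List (VBraidLetter m)) : Equiv.Perm (Fin m) :=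
  β.foldl (fun p l => letterPerm l.1 * p) 1

/-- Virtual braid equivalence: `w = v·β` for some virtual braid word `β`. -/
def VirtualEquiv {m : ℕ} (v w : Fin m → ℤ) : Prop :=
  ∃ β : List (VBraidLetter m), vwordAct β v = w

/-- Virtual-pure-braid equivalence: related by a virtual braid word with trivial
underlying permutation. -/
def VPureEquiv {m : ℕ} (v w : Fin m → ℤ) : Prop :=
  ∃ β : List (VBraidLetter m), vwordAct β v = w ∧ vwordPerm β = 1

/-!
`Δ` and `d` are Hurwitz invariants, so a vector equivalent to `(x^p, y^{2k-p})` has `Δ = 0` when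
`p` is even and `Δ = x - y = ±d` when `p` is odd.

Conversely, powers of `σ_i` shift the entries `i, i+1` by a common multiple of their difference, so
Euclid's algorithm on consecutive differences brings `v` to the form
`(p₁, p₁, …, p_{k-1}, p_{k-1}, c₁, c₂)` with `c₁ - c₂ = Δ`. A pair `(y, y)` commutes with every
entry and can be reflected through any other entry `a` (`y ↦ 2a - y`); two reflections translate
it by `2(a - b)`. If `Δ = ±d`, translating by multiples of `2(c₁ - c₂)` puts every pair onto `c₁`
or `c₂`. If `Δ = 0`, all entries come in pairs, and a Euclidean descent on the pair values ends
with only two values.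
-/

lemma exists_natAbs_sub_mul_lt (x : ℤ) {d : ℤ} (hd : d ≠ 0) :
    ∃ t, (x - t * d).natAbs < d.natAbs := by
  refine ⟨x / d, ?_⟩
  rw [mul_comm, ← Int.emod_def]
  have := Int.emod_lt x hd
  have := Int.emod_nonneg x hd
  omega

lemma exists_natAbs_add_lt_of_not_dvd {t r : ℤ} (ht : t ≠ 0) (h : ¬ t ∣ r) :
    ∃ k, (r + 2 * k * t).natAbs < t.natAbs := by
  wlog hpos : 0 < t generalizing t
  · obtain ⟨k, hk⟩ := this (t := -t) (by omega) (by rwa [neg_dvd]) (by omega)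
    exact ⟨-k, by simpa using hk⟩
  have hr : r = r % (2 * t) + 2 * t * (r / (2 * t)) := by rw [Int.emod_def]; ring
  have h0 := Int.emod_nonneg r (show 2 * t ≠ 0 by omega)
  have h1 := Int.emod_lt_of_pos r (show 0 < 2 * t by omega)
  generalize r % (2 * t) = ρ, r / (2 * t) = q at *
  subst hr
  rcases lt_trichotomy ρ t with hlt | rfl | hgt
  · exact ⟨-q, by ring_nf; omega⟩
  · exact absurd ⟨2 * q + 1, by ring⟩ h
  · exact ⟨-q - 1, by ring_nf; omega⟩

namespace List

lemma forall_dvd_sub_iff_of_mem {l : List ℤ} {b : ℤ} (hb : b ∈ l) (e : ℤ) :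
    (∀ x ∈ l, ∀ y ∈ l, e ∣ x - y) ↔ ∀ x ∈ l, e ∣ x - b :=
  ⟨fun h x hx => h x hx b hb, fun h x hx y hy => by simpa using dvd_sub (h x hx) (h y hy)⟩

lemma forall_dvd_sub_replicate_append_iff {p q : ℕ} (hp : p ≠ 0) (hq : q ≠ 0) (e x y : ℤ) :
    (∀ a ∈ replicate p x ++ replicate q y, ∀ b ∈ replicate p x ++ replicate q y, e ∣ a - b) ↔
      e ∣ x - y := by
  simp [mem_replicate, hp, hq, or_imp, forall_and, dvd_sub_comm]

lemma exists_perm_replicate_append_replicate {x y : ℤ} :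
    ∀ {s : List ℤ}, (∀ u ∈ s, u = x ∨ u = y) → ∃ A B, s ~ replicate A x ++ replicate B y
  | [], _ => ⟨0, 0, .nil⟩
  | u :: s, hs => by
    obtain ⟨A, B, h⟩ :=
      exists_perm_replicate_append_replicate fun v hv => hs v (mem_cons_of_mem u hv)
    rcases hs u mem_cons_self with rfl | rfl
    · exact ⟨A + 1, B, h.cons u⟩
    · exact ⟨A, B + 1, (h.cons u).trans (by rw [replicate_succ]; exact perm_middle.symm)⟩

lemma exists_ofFn_eq {α : Type*} {m : ℕ} {l : List α} (h : l.length = m) :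
    ∃ v : Fin m → α, ofFn v = l := by
  subst h
  exact ⟨l.get, ofFn_get l⟩

end List

namespace Hurwitz

open List

def pairs : List ℤ → List ℤ
  | [] => []
  | a :: s => a :: a :: pairs s

@[simp] lemma pairs_nil : pairs [] = [] := rfl

@[simp] lemma pairs_cons (a : ℤ) (s : List ℤ) : pairs (a :: s) = a :: a :: pairs s := rfl

@[simp] lemma mem_pairs {a : ℤ} {s : List ℤ} : a ∈ pairs s ↔ a ∈ s := by
  induction s with
  | nil => simp
  | cons b s ih => simp [ih]

@[simp] lemma pairs_append (s t : List ℤ) : pairs (s ++ t) = pairs s ++ pairs t := by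
  induction s with
  | nil => rfl
  | cons a s ih => simp [ih]

lemma pairs_replicate (n : ℕ) (a : ℤ) : pairs (replicate n a) = replicate (2 * n) a := by
  induction n with
  | zero => rfl
  | succ n ih => rw [replicate_succ, pairs_cons, ih, Nat.mul_succ, replicate_succ, replicate_succ]

@[simp] lemma alternatingSum_pairs_append (s t : List ℤ) :
    alternatingSum (pairs s ++ t) = alternatingSum t := by
  induction s with
  | nil => rfl
  | cons a s ih => simp [ih]

lemma alternatingSum_replicate_append_of_even {p q : ℕ} (hp : Even p) (hq : Even q) (x y : ℤ) :
    alternatingSum (replicate p x ++ replicate q y) = 0 := by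
  obtain ⟨A, rfl⟩ := hp
  obtain ⟨B, rfl⟩ := hq
  simpa [← two_mul, ← pairs_replicate] using
    alternatingSum_pairs_append (replicate A x ++ replicate B y) []

lemma alternatingSum_replicate_append_of_odd {p q : ℕ} (hp : Odd p) (hq : Odd q) (x y : ℤ) :
    alternatingSum (replicate p x ++ replicate q y) = x - y := by
  obtain ⟨A, rfl⟩ := hp
  obtain ⟨B, rfl⟩ := hq
  simp [replicate_succ', ← pairs_replicate]

def Step (l l' : List ℤ) : Prop :=
  ∃ xs a b ys, l = xs ++ a :: b :: ys ∧ l' = xs ++ b :: (2 * b - a) :: ys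

def ListEquiv : List ℤ → List ℤ → Prop := Relation.EqvGen Step

namespace ListEquiv

@[refl] lemma refl (l : List ℤ) : ListEquiv l l := Relation.EqvGen.refl l

lemma symm {l l' : List ℤ} (h : ListEquiv l l') : ListEquiv l' l := Relation.EqvGen.symm _ _ h

lemma trans {l₁ l₂ l₃ : List ℤ} (h : ListEquiv l₁ l₂) (h' : ListEquiv l₂ l₃) : ListEquiv l₁ l₃ :=
  Relation.EqvGen.trans _ _ _ h h'

lemma sigma {a b c : ℤ} (h : a + c = 2 * b) (R : List ℤ) : ListEquiv (a :: b :: R) (b :: c :: R) :=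
  Relation.EqvGen.rel _ _ ⟨[], a, b, R, rfl, by rw [show c = 2 * b - a by omega]; rfl⟩

lemma append_left {l l' : List ℤ} (h : ListEquiv l l') (p : List ℤ) :
    ListEquiv (p ++ l) (p ++ l') := by
  induction h with
  | rel _ _ h =>
    obtain ⟨xs, a, b, ys, rfl, rfl⟩ := h
    exact Relation.EqvGen.rel _ _ ⟨p ++ xs, a, b, ys, by simp, by simp⟩
  | refl => rfl
  | symm _ _ _ ih => exact ih.symm
  | trans _ _ _ _ _ ih ih' => exact ih.trans ih'

lemma append_right {l l' : List ℤ} (h : ListEquiv l l') (q : List ℤ) :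
    ListEquiv (l ++ q) (l' ++ q) := by
  induction h with
  | rel _ _ h =>
    obtain ⟨xs, a, b, ys, rfl, rfl⟩ := h
    exact Relation.EqvGen.rel _ _ ⟨xs, a, b, ys ++ q, by simp, by simp⟩
  | refl => rfl
  | symm _ _ _ ih => exact ih.symm
  | trans _ _ _ _ _ ih ih' => exact ih.trans ih'

lemma cons {l l' : List ℤ} (h : ListEquiv l l') (a : ℤ) : ListEquiv (a :: l) (a :: l') :=
  h.append_left [a]

lemma length_eq {l l' : List ℤ} (h : ListEquiv l l') : l.length = l'.length := by
  induction h with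
  | rel _ _ h =>
    obtain ⟨xs, a, b, ys, rfl, rfl⟩ := h
    simp
  | refl => rfl
  | symm _ _ _ ih => exact ih.symm
  | trans _ _ _ _ _ ih ih' => exact ih.trans ih'

lemma alternatingSum_eq {l l' : List ℤ} (h : ListEquiv l l') :
    alternatingSum l = alternatingSum l' := by
  induction h with
  | rel _ _ h =>
    obtain ⟨xs, a, b, ys, rfl, rfl⟩ := h
    simp only [alternatingSum_append, alternatingSum_cons]
    ring
  | refl => rfl
  | symm _ _ _ ih => exact ih.symm
  | trans _ _ _ _ _ ih ih' => exact ih.trans ih'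

lemma forall_dvd_sub_iff {l l' : List ℤ} (h : ListEquiv l l') (e : ℤ) :
    (∀ x ∈ l, ∀ y ∈ l, e ∣ x - y) ↔ (∀ x ∈ l', ∀ y ∈ l', e ∣ x - y) := by
  induction h with
  | rel _ _ h =>
    obtain ⟨xs, a, b, ys, rfl, rfl⟩ := h
    rw [forall_dvd_sub_iff_of_mem (b := b) (by simp), forall_dvd_sub_iff_of_mem (b := b) (by simp)]
    have : e ∣ 2 * b - a - b ↔ e ∣ a - b := by rw [← dvd_neg]; ring_nf
    simp [or_imp, forall_and, this]
  | refl => rfl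
  | symm _ _ _ ih => exact ih.symm
  | trans _ _ _ _ _ ih ih' => exact ih.trans ih'

lemma sigma_zpow (t a b : ℤ) (R : List ℤ) :
    ListEquiv (a :: b :: R) ((a + t * (b - a)) :: (b + t * (b - a)) :: R) := by
  induction t using Int.induction_on with
  | zero => simpa using refl _
  | succ t ih =>
    rw [show a + (t + 1) * (b - a) = b + t * (b - a) by ring]
    exact ih.trans (sigma (by ring) R)
  | pred t ih =>
    rw [show b + (-t - 1) * (b - a) = a + -t * (b - a) by ring]
    exact ih.trans (sigma (by ring) R).symm

lemma cons_pair_comm (a b : ℤ) (R : List ℤ) : ListEquiv (a :: b :: b :: R) (b :: b :: a :: R) :=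
  (sigma (c := 2 * b - a) (by ring) _).trans ((sigma (by ring) R).cons b)

lemma pair_append_comm (y : ℤ) (l R : List ℤ) :
    ListEquiv (y :: y :: (l ++ R)) (l ++ y :: y :: R) := by
  induction l with
  | nil => rfl
  | cons a l ih => exact (cons_pair_comm a y _).symm.trans (ih.cons a)

lemma pairs_append_comm (s l R : List ℤ) :
    ListEquiv (pairs s ++ (l ++ R)) (l ++ (pairs s ++ R)) := by
  induction s with
  | nil => rfl
  | cons u s ih => exact ((ih.cons u).cons u).trans (pair_append_comm u l _)

lemma pairs_perm {s s' : List ℤ} (h : s ~ s') : ListEquiv (pairs s) (pairs s') := by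
  induction h with
  | nil => rfl
  | cons x _ ih => exact (ih.cons x).cons x
  | swap x y l => exact pair_append_comm y [x, x] _
  | trans _ _ ih ih' => exact ih.trans ih'

lemma reflect_pair (c y : ℤ) (R : List ℤ) :
    ListEquiv (c :: y :: y :: R) (c :: (2 * c - y) :: (2 * c - y) :: R) :=
  (cons_pair_comm c y R).trans <| ((sigma (by ring) _).cons y).trans (sigma (by ring) _)

lemma reflect_pair_of_mem {a : ℤ} {l : List ℤ} (ha : a ∈ l) (y : ℤ) :
    ListEquiv (y :: y :: l) ((2 * a - y) :: (2 * a - y) :: l) := by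
  obtain ⟨L₁, L₂, rfl⟩ := append_of_mem ha
  have h := (reflect_pair a y L₂).append_left L₁
  have h₁ := pair_append_comm y (L₁ ++ [a]) L₂
  have h₂ := pair_append_comm (2 * a - y) (L₁ ++ [a]) L₂
  simp only [append_assoc, cons_append, nil_append] at h₁ h₂
  exact h₁.trans (h.trans h₂.symm)

/-- Two reflections translate a pair by twice the difference of the mirrors. -/
lemma translate_pair {a b : ℤ} {l : List ℤ} (ha : a ∈ l) (hb : b ∈ l) (k y : ℤ) :
    ListEquiv (y :: y :: l) ((y + 2 * k * (a - b)) :: (y + 2 * k * (a - b)) :: l) := by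
  induction k using Int.induction_on with
  | zero => simpa using refl _
  | succ k ih =>
    refine ih.trans ((reflect_pair_of_mem hb _).trans ?_)
    convert reflect_pair_of_mem ha _ using 3 <;> ring
  | pred k ih =>
    refine ih.trans ((reflect_pair_of_mem ha _).trans ?_)
    convert reflect_pair_of_mem hb _ using 3 <;> ring

lemma pairs_replicate_append (x y : ℤ) (A B : ℕ) :
    ListEquiv (pairs (replicate A x ++ replicate B y) ++ [x, y])
      (replicate (2 * A + 1) x ++ replicate (2 * B + 1) y) := by
  simpa [replicate_succ', pairs_replicate] using
    (pairs_append_comm (replicate B y) [x] [y]).append_left (pairs (replicate A x))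

end ListEquiv

/-- Euclid's algorithm on the two differences `b - a`, `c - b`, using powers of `σ₁` and `σ₂`. -/
lemma exists_pair_head (a b c : ℤ) (R : List ℤ) :
    ∃ e c', ListEquiv (a :: b :: c :: R) (e :: e :: c' :: R) := by
  induction hn : (b - a).natAbs using Nat.strong_induction_on generalizing a b c with
  | _ n ih =>
    rcases eq_or_ne b a with rfl | hba
    · exact ⟨b, c, .refl _⟩
    obtain ⟨t, ht⟩ := exists_natAbs_sub_mul_lt (c - b) (sub_ne_zero.2 hba)
    have h₁ := ListEquiv.sigma_zpow t a b (c :: R)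
    set a₁ := a + t * (b - a)
    set b₁ := b + t * (b - a)
    rcases eq_or_ne c b₁ with hc | hc
    · exact ⟨b₁, a₁, h₁.trans (hc ▸ ListEquiv.cons_pair_comm a₁ b₁ R)⟩
    obtain ⟨s, hs⟩ := exists_natAbs_sub_mul_lt (b - a) (sub_ne_zero.2 hc)
    have h₂ := (ListEquiv.sigma_zpow (-s) b₁ c R).cons a₁
    have hlt : (b₁ + -s * (c - b₁) - a₁).natAbs < n := by
      have : b₁ + -s * (c - b₁) - a₁ = b - a - s * (c - b₁) := by ring
      have : c - b₁ = c - b - t * (b - a) := by ring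
      omega
    obtain ⟨e, c', h₃⟩ := ih _ hlt _ _ (c + -s * (c - b₁)) rfl
    exact ⟨e, c', h₁.trans (h₂.trans h₃)⟩

lemma exists_pairs_append (n : ℕ) (l : List ℤ) (hl : l.length = 2 * n + 2) :
    ∃ s c₁ c₂, ListEquiv l (pairs s ++ [c₁, c₂]) := by
  induction n generalizing l with
  | zero =>
    match l, hl with
    | [c₁, c₂], _ => exact ⟨[], c₁, c₂, .refl _⟩
  | succ n ih =>
    match l, hl with
    | a :: b :: c :: R, hl =>
      obtain ⟨e, c', h⟩ := exists_pair_head a b c R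
      obtain ⟨s, c₁, c₂, h'⟩ := ih (c' :: R) (by simp at hl ⊢; omega)
      exact ⟨e :: s, c₁, c₂, h.trans ((h'.cons e).cons e)⟩

lemma exists_two_valued_of_dvd {a b : ℤ} {T : List ℤ} (ha : a ∈ T) (hb : b ∈ T) :
    ∀ s : List ℤ, (∀ u ∈ s, a - b ∣ u - a) →
      ∃ s', (∀ u ∈ s', u = a ∨ u = b) ∧ ListEquiv (pairs s ++ T) (pairs s' ++ T)
  | [], _ => ⟨[], by simp, .refl _⟩
  | u :: s, hs => by
    obtain ⟨s', hs', h⟩ :=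
      exists_two_valued_of_dvd ha hb s fun v hv => hs v (mem_cons_of_mem u hv)
    have hmove := ListEquiv.translate_pair (l := pairs s ++ T) (a := a) (b := b)
      (by simp [ha]) (by simp [hb])
    obtain ⟨w, hw⟩ := hs u mem_cons_self
    obtain ⟨j, rfl | rfl⟩ := Int.even_or_odd' w
    · refine ⟨a :: s', by simpa using hs', ?_⟩
      have h₁ := hmove (-j) u
      rw [show u + 2 * -j * (a - b) = a by linear_combination hw] at h₁
      exact h₁.trans ((h.cons a).cons a)
    · refine ⟨b :: s', by simpa using hs', ?_⟩
      have h₁ := hmove (-j - 1) u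
      rw [show u + 2 * (-j - 1) * (a - b) = b by linear_combination hw] at h₁
      exact h₁.trans ((h.cons b).cons b)

/-- Descent on `|a - b|`: unless `a - b` divides every `c - a`, some `c` translates to within
`|a - b|` of `a`. -/
lemma exists_two_valued_of_ne {s : List ℤ} {a b : ℤ} (ha : a ∈ s) (hb : b ∈ s) (hab : a ≠ b) :
    ∃ x y s', (∀ u ∈ s', u = x ∨ u = y) ∧ ListEquiv (pairs s) (pairs s') := by
  induction hn : (a - b).natAbs using Nat.strong_induction_on generalizing s b with
  | _ n ih =>
    by_cases hdvd : ∀ c ∈ s, a - b ∣ c - a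
    · set rest := (s.erase a).erase b
      have hperm : s ~ rest ++ [a, b] :=
        (perm_cons_erase ha).trans <|
          ((perm_cons_erase ((mem_erase_of_ne hab.symm).2 hb)).cons a).trans
          (by simpa using perm_append_comm (l₁ := [a, b]) (l₂ := rest))
      obtain ⟨s', hs', h⟩ := exists_two_valued_of_dvd (T := pairs [a, b]) (by simp) (by simp) rest
        fun c hc => hdvd c (mem_of_mem_erase (mem_of_mem_erase hc))
      refine ⟨a, b, s' ++ [a, b], by simpa [or_imp, forall_and] using hs', ?_⟩
      exact (ListEquiv.pairs_perm hperm).trans (by simpa using h)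
    · obtain ⟨c, hc, hndvd⟩ := not_forall₂.1 hdvd
      obtain ⟨k, hk⟩ := exists_natAbs_add_lt_of_not_dvd (sub_ne_zero.2 hab) hndvd
      have hca : c ≠ a := by rintro rfl; simp at hndvd
      have hcb : c ≠ b := by rintro rfl; exact hndvd ⟨-1, by ring⟩
      have ha' := (mem_erase_of_ne hca.symm).2 ha
      have h₁ : ListEquiv (pairs s) (pairs ((c + 2 * k * (a - b)) :: s.erase c)) :=
        (ListEquiv.pairs_perm (perm_cons_erase hc)).trans <|
          ListEquiv.translate_pair (by simpa using ha')
            (by simpa using (mem_erase_of_ne hcb.symm).2 hb) k c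
      have hlt : (a - (c + 2 * k * (a - b))).natAbs < n := by
        rw [← hn, ← Int.natAbs_neg]
        convert hk using 2
        ring
      have hne : a ≠ c + 2 * k * (a - b) := fun h => hndvd ⟨-2 * k, by linear_combination -h⟩
      obtain ⟨x, y, s', hs', h₂⟩ := ih _ hlt (mem_cons_of_mem _ ha') mem_cons_self hne rfl
      exact ⟨x, y, s', hs', h₁.trans h₂⟩

lemma exists_two_valued (s : List ℤ) :
    ∃ x y s', (∀ u ∈ s', u = x ∨ u = y) ∧ ListEquiv (pairs s) (pairs s') := by
  by_cases h : ∃ a ∈ s, ∃ b ∈ s, a ≠ b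
  · obtain ⟨a, ha, b, hb, hab⟩ := h
    exact exists_two_valued_of_ne ha hb hab
  · push Not at h
    cases s with
    | nil => exact ⟨0, 0, [], by simp, .refl _⟩
    | cons a s => exact ⟨a, a, a :: s, fun u hu => .inl (h u hu a mem_cons_self), .refl _⟩

lemma exists_replicate_even_of_alternatingSum_eq_zero {n : ℕ} {l : List ℤ}
    (hl : l.length = 2 * n + 2) (h : alternatingSum l = 0) :
    ∃ x y A B, ListEquiv l (replicate (2 * A) x ++ replicate (2 * B) y) := by
  obtain ⟨s, c₁, c₂, h₁⟩ := exists_pairs_append n l hl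
  obtain rfl : c₁ = c₂ := by
    have := h₁.alternatingSum_eq
    simp at this
    omega
  obtain ⟨x, y, s', hs', h₂⟩ := exists_two_valued (s ++ [c₁])
  obtain ⟨A, B, hperm⟩ := exists_perm_replicate_append_replicate hs'
  refine ⟨x, y, A, B, h₁.trans ?_⟩
  simpa [pairs_replicate] using h₂.trans (ListEquiv.pairs_perm hperm)

lemma exists_replicate_odd_of_alternatingSum_dvd {n : ℕ} {l : List ℤ}
    (hl : l.length = 2 * n + 2) (h : ∀ a ∈ l, ∀ b ∈ l, alternatingSum l ∣ a - b) :
    ∃ x y A B, ListEquiv l (replicate (2 * A + 1) x ++ replicate (2 * B + 1) y) := by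
  obtain ⟨s, c₁, c₂, h₁⟩ := exists_pairs_append n l hl
  have hΔ : alternatingSum l = c₁ - c₂ := by simpa using h₁.alternatingSum_eq
  rw [hΔ, h₁.forall_dvd_sub_iff] at h
  obtain ⟨s', hs', h₂⟩ := exists_two_valued_of_dvd (T := [c₁, c₂]) (by simp) (by simp) s
    fun u hu => h u (by simp [hu]) c₁ (by simp)
  obtain ⟨A, B, hperm⟩ := exists_perm_replicate_append_replicate hs'
  exact ⟨c₁, c₂, A, B, h₁.trans <| h₂.trans <| ((ListEquiv.pairs_perm hperm).append_right _).trans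
    (ListEquiv.pairs_replicate_append c₁ c₂ A B)⟩

end Hurwitz

open Hurwitz List

lemma ofFn_sigmaAct {m : ℕ} {i : Fin (m - 1)} {v : Fin m → ℤ} {xs ys : List ℤ} {a b : ℤ}
    (hv : ofFn v = xs ++ a :: b :: ys) (hi : xs.length = i) :
    ofFn (sigmaAct i v) = xs ++ b :: (2 * b - a) :: ys := by
  have hm : m = xs.length + ys.length + 2 := by
    have := congrArg length hv
    simp at this
    omega
  have hval : ∀ (j : ℕ) (hj : j < m), v ⟨j, hj⟩ = (xs ++ a :: b :: ys)[j]'(by simp; omega) := by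
    intro j hj
    simp [← hv]
  apply ext_getElem (by simp; omega)
  intro j h₁ h₂
  simp only [List.getElem_ofFn, sigmaAct, hval, getElem_append, getElem_cons]
  split_ifs <;> omega

lemma ofFn_eq_take_append_cons {m : ℕ} (v : Fin m → ℤ) (i : Fin (m - 1)) :
    ofFn v =
      (ofFn v).take i ++ v ⟨i, by omega⟩ :: v ⟨i + 1, by omega⟩ :: (ofFn v).drop (i + 2) := by
  have hdrop :
      (ofFn v).drop i = v ⟨i, by omega⟩ :: v ⟨i + 1, by omega⟩ :: (ofFn v).drop (i + 2) := by
    rw [drop_eq_getElem_cons (by simp; omega), drop_eq_getElem_cons (by simp; omega)]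
    simp
  rw [← hdrop, take_append_drop]

lemma hurwitzEquiv_iff_listEquiv {m : ℕ} {v w : Fin m → ℤ} :
    HurwitzEquiv v w ↔ ListEquiv (ofFn v) (ofFn w) := by
  constructor
  · intro h
    induction h with
    | rel v _ h =>
      obtain ⟨i, rfl⟩ := h
      have hv := ofFn_eq_take_append_cons v i
      exact .rel _ _ ⟨_, _, _, _, hv, ofFn_sigmaAct hv (by simp; omega)⟩
    | refl => rfl
    | symm _ _ _ ih => exact ih.symm
    | trans _ _ _ _ _ ih ih' => exact ih.trans ih'
  · suffices ∀ l l', ListEquiv l l' → ∀ v w : Fin m → ℤ, ofFn v = l → ofFn w = l' →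
        HurwitzEquiv v w from fun h => this _ _ h v w rfl rfl
    intro l l' h
    induction h with
    | rel l l' h =>
      obtain ⟨xs, a, b, ys, rfl, rfl⟩ := h
      intro v w hv hw
      have hi : xs.length < m - 1 := by
        have := congrArg length hv
        simp at this
        omega
      exact .rel _ _ ⟨⟨xs.length, hi⟩, ofFn_injective (by rw [hw, ofFn_sigmaAct hv rfl])⟩
    | refl => exact fun v w hv hw => ofFn_injective (hv.trans hw.symm) ▸ .refl _
    | symm _ _ _ ih => exact fun v w hv hw => .symm _ _ (ih w v hw hv)
    | trans l₁ l₂ l₃ h₁₂ _ ih ih' =>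
      intro v w hv hw
      obtain ⟨u, hu⟩ := exists_ofFn_eq (m := m) (l := l₂)
        (by rw [← ListEquiv.length_eq h₁₂, ← hv, length_ofFn])
      exact .trans _ _ _ (ih v u hv hu) (ih' u w hu hw)

lemma alternatingSum_ofFn {m : ℕ} (v : Fin m → ℤ) : alternatingSum (ofFn v) = Delta v := by
  induction m with
  | zero => simp [Delta]
  | succ m ih =>
    rw [ofFn_succ, alternatingSum_cons, ih, Delta, Delta, Fin.sum_univ_succ]
    simp [pow_succ, Finset.sum_neg_distrib, sub_eq_add_neg]

lemma dvd_dgcd_iff {m : ℕ} (v : Fin m → ℤ) (e : ℤ) :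
    e ∣ dgcd v ↔ ∀ a ∈ ofFn v, ∀ b ∈ ofFn v, e ∣ a - b := by
  simp [dgcd, Finset.dvd_gcd_iff]

lemma dgcd_nonneg {m : ℕ} (v : Fin m → ℤ) : 0 ≤ dgcd v :=
  Int.nonneg_of_normalize_eq_self Finset.normalize_gcd

lemma HurwitzEquiv.delta_eq {m : ℕ} {v w : Fin m → ℤ} (h : HurwitzEquiv v w) :
    Delta v = Delta w := by
  rw [← alternatingSum_ofFn, ← alternatingSum_ofFn]
  exact (hurwitzEquiv_iff_listEquiv.1 h).alternatingSum_eq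

lemma HurwitzEquiv.dgcd_eq {m : ℕ} {v w : Fin m → ℤ} (h : HurwitzEquiv v w) :
    dgcd v = dgcd w := by
  have := (hurwitzEquiv_iff_listEquiv.1 h).forall_dvd_sub_iff
  refine Int.dvd_antisymm (dgcd_nonneg v) (dgcd_nonneg w) ?_ ?_
  · exact (dvd_dgcd_iff w _).2 ((this _).1 ((dvd_dgcd_iff v _).1 dvd_rfl))
  · exact (dvd_dgcd_iff v _).2 ((this _).2 ((dvd_dgcd_iff w _).1 dvd_rfl))

lemma ofFn_ite_lt {m p : ℕ} (hp : p ≤ m) (x y : ℤ) :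
    ofFn (fun j : Fin m => if (j : ℕ) < p then x else y) =
      replicate p x ++ replicate (m - p) y := by
  apply ext_getElem (by simp; omega)
  intro j h₁ h₂
  simp only [List.getElem_ofFn, getElem_append, getElem_replicate, length_replicate, dite_eq_ite]

lemma hurwitzEquiv_ite_lt_of_listEquiv {m p q : ℕ} {v : Fin m → ℤ} {x y : ℤ}
    (h : ListEquiv (ofFn v) (replicate p x ++ replicate q y)) :
    p + q = m ∧ HurwitzEquiv v (fun j : Fin m => if (j : ℕ) < p then x else y) := by
  have hm : p + q = m := by simpa using h.length_eq.symm
  refine ⟨hm, hurwitzEquiv_iff_listEquiv.2 ?_⟩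
  rwa [ofFn_ite_lt (by omega), show m - p = q by omega]

lemma delta_eq_zero_of_hurwitzEquiv_ite {k p : ℕ} {v : Fin (2 * k) → ℤ} {x y : ℤ}
    (hp : p ≤ 2 * k) (he : Even p) (h : HurwitzEquiv v (fun j => if (j : ℕ) < p then x else y)) :
    Delta v = 0 := by
  rw [h.delta_eq, ← alternatingSum_ofFn, ofFn_ite_lt hp]
  obtain ⟨A, rfl⟩ := he
  exact alternatingSum_replicate_append_of_even ⟨A, rfl⟩ ⟨k - A, by omega⟩ x y

lemma delta_eq_dgcd_or_neg_of_hurwitzEquiv_ite {k p : ℕ} {v : Fin (2 * k) → ℤ} {x y : ℤ}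
    (hp : p ≤ 2 * k) (ho : Odd p) (h : HurwitzEquiv v (fun j => if (j : ℕ) < p then x else y)) :
    Delta v = dgcd v ∨ Delta v = -dgcd v := by
  have hq : Odd (2 * k - p) := by
    obtain ⟨A, rfl⟩ := ho
    exact ⟨k - A - 1, by omega⟩
  have hdvd := dvd_dgcd_iff (fun j : Fin (2 * k) => if (j : ℕ) < p then x else y)
  simp only [ofFn_ite_lt hp, forall_dvd_sub_replicate_append_iff ho.pos.ne' hq.pos.ne'] at hdvd
  rw [h.delta_eq, h.dgcd_eq, ← alternatingSum_ofFn, ofFn_ite_lt hp,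
    alternatingSum_replicate_append_of_odd ho hq]
  exact Int.natAbs_eq_natAbs_iff.1 <|
    Int.natAbs_eq_of_dvd_dvd ((hdvd _).2 dvd_rfl) ((hdvd _).1 dvd_rfl)

lemma exists_hurwitzEquiv_ite_of_delta_eq_zero {k : ℕ} (hk : k ≠ 0) {v : Fin (2 * k) → ℤ}
    (h : Delta v = 0) :
    ∃ (x y : ℤ) (p : ℕ), p ≤ 2 * k ∧ Even p ∧ Even (2 * k - p) ∧
      HurwitzEquiv v (fun j => if (j : ℕ) < p then x else y) := by
  obtain ⟨x, y, A, B, h⟩ := exists_replicate_even_of_alternatingSum_eq_zero (n := k - 1)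
    (l := ofFn v) (by simp; omega) (by rwa [alternatingSum_ofFn])
  obtain ⟨hAB, h⟩ := hurwitzEquiv_ite_lt_of_listEquiv h
  refine ⟨x, y, 2 * A, by omega, even_two_mul A, ?_, h⟩
  rw [show 2 * k - 2 * A = 2 * B by omega]
  exact even_two_mul B

lemma exists_hurwitzEquiv_ite_of_delta_dvd {k : ℕ} (hk : k ≠ 0) {v : Fin (2 * k) → ℤ}
    (h : Delta v ∣ dgcd v) :
    ∃ (x y : ℤ) (p : ℕ), p ≤ 2 * k ∧ HurwitzEquiv v (fun j => if (j : ℕ) < p then x else y) := by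
  rw [← alternatingSum_ofFn] at h
  obtain ⟨x, y, A, B, h⟩ := exists_replicate_odd_of_alternatingSum_dvd (n := k - 1)
    (l := ofFn v) (by simp; omega) ((dvd_dgcd_iff v _).1 h)
  obtain ⟨hAB, h⟩ := hurwitzEquiv_ite_lt_of_listEquiv h
  exact ⟨x, y, 2 * A + 1, by omega, h⟩

/-- `v ∈ ℤ^{2k}` is Hurwitz equivalent to a vector of the form
`(x,…,x,y,…,y)` iff `Δ(v) ∈ {0, ±d(v)}`; it is equivalent to such a vector with
both blocks of even length iff `Δ(v) = 0`. -/
theorem stmt_12 (k : ℕ) (hk : 2 ≤ k) (v : Fin (2 * k) → ℤ) :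
    ((∃ (x y : ℤ) (p : ℕ), p ≤ 2 * k ∧
        HurwitzEquiv v (fun j => if (j : ℕ) < p then x else y)) ↔
      (Delta v = 0 ∨ Delta v = dgcd v ∨ Delta v = -dgcd v)) ∧
    ((∃ (x y : ℤ) (p : ℕ), p ≤ 2 * k ∧ Even p ∧ Even (2 * k - p) ∧
        HurwitzEquiv v (fun j => if (j : ℕ) < p then x else y)) ↔
      Delta v = 0) := by
  have hk₀ : k ≠ 0 := by omega
  refine ⟨⟨?_, ?_⟩, ⟨?_, exists_hurwitzEquiv_ite_of_delta_eq_zero hk₀⟩⟩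
  · rintro ⟨x, y, p, hp, h⟩
    rcases Nat.even_or_odd p with he | ho
    · exact .inl (delta_eq_zero_of_hurwitzEquiv_ite hp he h)
    · exact .inr (delta_eq_dgcd_or_neg_of_hurwitzEquiv_ite hp ho h)
  · rintro (h | h | h)
    · obtain ⟨x, y, p, hp, -, -, h⟩ := exists_hurwitzEquiv_ite_of_delta_eq_zero hk₀ h
      exact ⟨x, y, p, hp, h⟩
    · exact exists_hurwitzEquiv_ite_of_delta_dvd hk₀ (by rw [h])
    · exact exists_hurwitzEquiv_ite_of_delta_dvd hk₀ (by rw [h, neg_dvd])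
  · rintro ⟨x, y, p, hp, he, -, h⟩
    exact delta_eq_zero_of_hurwitzEquiv_ite hp he h
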